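/- The ring $\mathbb{R}[X,Y]/\langle X^2 + Y^2 - 1 \rangle$ (the coordinate ring of the real circle) is not a principal ideal domain; specifically, the maximal ideal generated by the images of $X - 1$ and $Y$ is not principal. -/
import Mathlib

open MvPolynomial

noncomputable def circleIdeal : Ideal (MvPolynomial (Fin 2) ℝ) :=
  Ideal.span {(X 0 : MvPolynomial (Fin 2) ℝ) ^ 2 + (X 1) ^ 2 - 1}

noncomputable def iota : Polynomial ℝ →ₐ[ℝ] MvPolynomial (Fin 2) ℝ :=
  Polynomial.aeval (X 0)

lemma circle_mem : ((X 0 : MvPolynomial (Fin 2) ℝ) ^ 2 + X 1 ^ 2 - 1) ∈ circleIdeal :=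
  Ideal.subset_span rfl

lemma decomp (f : MvPolynomial (Fin 2) ℝ) :
    ∃ p q : Polynomial ℝ, f - (iota p + iota q * X 1) ∈ circleIdeal := by
  induction f using MvPolynomial.induction_on with
  | C a =>
      refine ⟨Polynomial.C a, 0, ?_⟩
      have : (MvPolynomial.C a : MvPolynomial (Fin 2) ℝ) - (iota (Polynomial.C a) + iota 0 * X 1) = 0 := by
        simp [iota]
      rw [this]; exact Ideal.zero_mem _
  | add f g hf hg =>
      obtain ⟨p, q, hf⟩ := hf; obtain ⟨r, s, hg⟩ := hg
      refine ⟨p + r, q + s, ?_⟩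
      have h := Ideal.add_mem _ hf hg
      have e : f + g - (iota (p + r) + iota (q + s) * X 1)
          = (f - (iota p + iota q * X 1)) + (g - (iota r + iota s * X 1)) := by
        simp [map_add]; ring
      rw [e]; exact h
  | mul_X f n hf =>
      obtain ⟨p, q, hf⟩ := hf
      fin_cases n
      · show ∃ p q : Polynomial ℝ, f * X 0 - (iota p + iota q * X 1) ∈ circleIdeal
        refine ⟨Polynomial.X * p, Polynomial.X * q, ?_⟩
        have h := Ideal.mul_mem_right (X 0) _ hf
        have e : f * X 0 - (iota (Polynomial.X * p) + iota (Polynomial.X * q) * X 1)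
            = (f - (iota p + iota q * X 1)) * X 0 := by
          simp [iota, map_mul]; ring
        rw [e]; exact h
      · show ∃ p q : Polynomial ℝ, f * X 1 - (iota p + iota q * X 1) ∈ circleIdeal
        refine ⟨(1 - Polynomial.X ^ 2) * q, p, ?_⟩
        have h1 := Ideal.mul_mem_right (X 1) _ hf
        have h3 := Ideal.mul_mem_left _ (iota q) circle_mem
        have h := Ideal.add_mem _ h1 h3
        have e : f * X 1 - (iota ((1 - Polynomial.X ^ 2) * q) + iota p * X 1)
            = (f - (iota p + iota q * X 1)) * X 1
              + iota q * ((X 0 : MvPolynomial (Fin 2) ℝ) ^ 2 + X 1 ^ 2 - 1) := by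
          simp [iota, map_mul, map_sub, map_one, map_pow]; ring
        rw [e]; exact h

lemma unique (p q : Polynomial ℝ) (h : iota p + iota q * X 1 ∈ circleIdeal) :
    p = 0 ∧ q = 0 := by
  have key : ∀ θ : ℝ, p.eval (Real.cos θ) + q.eval (Real.cos θ) * Real.sin θ = 0 := by
    intro θ
    set v : Fin 2 → ℝ := ![Real.cos θ, Real.sin θ] with hv
    have hker : circleIdeal ≤ RingHom.ker (MvPolynomial.aeval v).toRingHom := by
      rw [circleIdeal, Ideal.span_le]
      intro a ha
      simp only [Set.mem_singleton_iff] at ha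
      subst ha
      simp [RingHom.mem_ker, hv, Real.cos_sq_add_sin_sq]
    have h0 : (MvPolynomial.aeval v) (iota p + iota q * X 1) = 0 := hker h
    have hip : ∀ r : Polynomial ℝ, (MvPolynomial.aeval v) (iota r) = r.eval (Real.cos θ) := by
      intro r
      rw [iota, ← Polynomial.aeval_algHom_apply]
      simp [hv]
    rw [map_add, map_mul, hip, hip] at h0
    simpa [hv] using h0
  have hp : ∀ θ : ℝ, p.eval (Real.cos θ) = 0 := by
    intro θ
    have h1 := key θ
    have h2 := key (-θ)
    rw [Real.cos_neg, Real.sin_neg] at h2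
    linarith
  have hpz : p = 0 := by
    apply Polynomial.eq_zero_of_infinite_isRoot
    apply Set.Infinite.mono (s := Set.Icc (-1 : ℝ) 1)
    · intro a ha
      have := hp (Real.arccos a)
      rwa [Real.cos_arccos ha.1 ha.2] at this
    · exact Set.Icc_infinite (by norm_num)
  have hq : ∀ a : ℝ, a ∈ Set.Ioo (-1 : ℝ) 1 → q.eval a = 0 := by
    intro a ha
    have h1 := key (Real.arccos a)
    rw [Real.cos_arccos ha.1.le ha.2.le, hpz, Real.sin_arccos] at h1
    have hs : Real.sqrt (1 - a ^ 2) > 0 := by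
      apply Real.sqrt_pos.mpr
      nlinarith [ha.1, ha.2]
    simp only [Polynomial.eval_zero, zero_add] at h1
    have := mul_eq_zero.mp h1
    rcases this with h | h
    · exact h
    · linarith
  have hqz : q = 0 := by
    apply Polynomial.eq_zero_of_infinite_isRoot
    apply Set.Infinite.mono (s := Set.Ioo (-1 : ℝ) 1)
    · intro a ha; exact hq a ha
    · exact Set.Ioo_infinite (by norm_num)
  exact ⟨hpz, hqz⟩

lemma components (f g w : MvPolynomial (Fin 2) ℝ) (p q r s : Polynomial ℝ)
    (hf : f - (iota p + iota q * X 1) ∈ circleIdeal)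
    (hg : g - (iota r + iota s * X 1) ∈ circleIdeal)
    (hw : g * f - w ∈ circleIdeal)
    (a b : Polynomial ℝ)
    (hwa : w - (iota a + iota b * X 1) ∈ circleIdeal) :
    p * r + q * s * (1 - Polynomial.X ^ 2) = a ∧ p * s + q * r = b := by
  set A := iota p + iota q * X 1 with hA
  set B := iota r + iota s * X 1 with hB
  have key : iota (p * r + q * s * (1 - Polynomial.X ^ 2) - a)
      + iota (p * s + q * r - b) * X 1 ∈ circleIdeal := by
    have e : iota (p * r + q * s * (1 - Polynomial.X ^ 2) - a)
        + iota (p * s + q * r - b) * X 1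
        = (g * f - w) - (g - B) * f - B * (f - A)
          - iota (q * s) * ((X 0 : MvPolynomial (Fin 2) ℝ) ^ 2 + X 1 ^ 2 - 1)
          + (w - (iota a + iota b * X 1)) := by
      simp only [hA, hB, iota, map_add, map_mul, map_sub, map_one, map_pow,
        Polynomial.aeval_X]
      ring
    rw [e]
    exact Ideal.add_mem _ (Ideal.sub_mem _ (Ideal.sub_mem _ (Ideal.sub_mem _ hw
      (Ideal.mul_mem_right _ _ hg)) (Ideal.mul_mem_left _ _ hf))
      (Ideal.mul_mem_left _ _ circle_mem)) hwa
  obtain ⟨h1, h2⟩ := unique _ _ key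
  exact ⟨sub_eq_zero.mp h1, sub_eq_zero.mp h2⟩

theorem circle_ring_not_PID :
    ¬ IsPrincipalIdealRing (MvPolynomial (Fin 2) ℝ ⧸ circleIdeal) ∧
    ¬ (Ideal.span {Ideal.Quotient.mk circleIdeal (X 0 - 1),
        Ideal.Quotient.mk circleIdeal (X 1)}).IsPrincipal := by
  have main : ¬ (Ideal.span {Ideal.Quotient.mk circleIdeal (X 0 - 1),
        Ideal.Quotient.mk circleIdeal (X 1)}).IsPrincipal := by
    rintro ⟨gen, hgen⟩
    obtain ⟨f, rfl⟩ := Ideal.Quotient.mk_surjective gen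
    set mk := Ideal.Quotient.mk circleIdeal with hmk
    rw [Ideal.submodule_span_eq] at hgen
    -- f ≡ iota p + iota q * X 1
    obtain ⟨p, q, hf⟩ := decomp f
    -- X 1 ∈ (f)
    have hy : mk (X 1) ∈ Ideal.span {mk f} := by
      rw [← hgen]
      exact Ideal.subset_span (by simp)
    rw [Ideal.mem_span_singleton'] at hy
    obtain ⟨g0, hg0⟩ := hy
    obtain ⟨g, rfl⟩ := Ideal.Quotient.mk_surjective g0
    have hgy : g * f - X 1 ∈ circleIdeal := by
      rw [← Ideal.Quotient.eq, map_mul]; exact hg0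
    obtain ⟨r, s, hg⟩ := decomp g
    -- X 0 - 1 ∈ (f)
    have hx : mk (X 0 - 1) ∈ Ideal.span {mk f} := by
      rw [← hgen]
      exact Ideal.subset_span (by simp)
    rw [Ideal.mem_span_singleton'] at hx
    obtain ⟨h0, hh0⟩ := hx
    obtain ⟨hh, rfl⟩ := Ideal.Quotient.mk_surjective h0
    have hhx : hh * f - (X 0 - 1) ∈ circleIdeal := by
      rw [← Ideal.Quotient.eq, map_mul]; exact hh0
    obtain ⟨u, v, hu⟩ := decomp hh
    -- component equations
    have hy1 : X 1 - (iota 0 + iota 1 * X 1) ∈ circleIdeal := by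
      simp [iota]
    obtain ⟨e1, e2⟩ := components f g (X 1) p q r s hf hg hgy 0 1 hy1
    have hx1 : (X 0 - 1 : MvPolynomial (Fin 2) ℝ)
        - (iota (Polynomial.X - 1) + iota 0 * X 1) ∈ circleIdeal := by
      simp [iota]
    obtain ⟨e3, e4⟩ := components f hh (X 0 - 1) p q u v hf hu hhx
      (Polynomial.X - 1) 0 hx1
    -- p.eval 1 = 0
    have hp1 : p.eval 1 = 0 := by
      set ev : MvPolynomial (Fin 2) ℝ →ₐ[ℝ] ℝ := MvPolynomial.aeval ![1, 0] with hev
      have hevI : ∀ z ∈ circleIdeal, ev z = 0 := by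
        intro z hz
        rw [circleIdeal, Ideal.mem_span_singleton] at hz
        obtain ⟨c, rfl⟩ := hz
        simp [hev]
      have hmem : mk f ∈ Ideal.map mk (Ideal.span {(X 0 : MvPolynomial (Fin 2) ℝ) - 1, X 1}) := by
        rw [Ideal.map_span, Set.image_insert_eq, Set.image_singleton, hgen]
        exact Ideal.mem_span_singleton_self _
      rw [Ideal.mem_map_iff_of_surjective _ Ideal.Quotient.mk_surjective] at hmem
      obtain ⟨w, hwmem, hwf⟩ := hmem
      have hwf' : w - f ∈ circleIdeal := Ideal.Quotient.eq.mp hwf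
      have hevw : ev w = 0 := by
        revert hwmem
        have : Ideal.span {(X 0 : MvPolynomial (Fin 2) ℝ) - 1, X 1}
            ≤ RingHom.ker ev.toRingHom := by
          rw [Ideal.span_le]
          intro z hz
          rcases hz with hz | hz
          · simp only [hz]; simp [RingHom.mem_ker, hev]
          · simp only [Set.mem_singleton_iff] at hz; simp [hz, RingHom.mem_ker, hev]
        intro hwmem
        exact this hwmem
      have hevf : ev f = 0 := by
        have := hevI _ hwf'
        have : ev w - ev f = 0 := by rw [← map_sub]; exact this
        linarith [hevw, this]
      have hevA : ev (iota p + iota q * X 1) = p.eval 1 := by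
        rw [map_add, map_mul]
        have hip : ∀ t : Polynomial ℝ, ev (iota t) = t.eval 1 := by
          intro t
          rw [iota, ← Polynomial.aeval_algHom_apply]
          simp [hev]
        rw [hip, hip]
        simp [hev]
      have := hevI _ hf
      rw [map_sub, hevf, hevA] at this
      linarith
    -- Norm computations in ℝ[X]
    set Np : Polynomial ℝ := p ^ 2 - q ^ 2 * (1 - Polynomial.X ^ 2) with hNp
    have hNpNr : Np * (r ^ 2 - s ^ 2 * (1 - Polynomial.X ^ 2)) = Polynomial.X ^ 2 - 1 := by
      rw [hNp]
      linear_combination (p * r + q * s * (1 - Polynomial.X ^ 2)) * e1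
        - (1 - Polynomial.X ^ 2) * (p * s + q * r + 1) * e2
    have hNpNu : Np * (u ^ 2 - v ^ 2 * (1 - Polynomial.X ^ 2)) = (Polynomial.X - 1) ^ 2 := by
      rw [hNp]
      linear_combination (p * u + q * v * (1 - Polynomial.X ^ 2) + Polynomial.X - 1) * e3
        - (1 - Polynomial.X ^ 2) * (p * v + q * u) * e4
    have hroot : (Polynomial.X - Polynomial.C (1 : ℝ)) ∣ Np := by
      rw [Polynomial.dvd_iff_isRoot]
      simp [Polynomial.IsRoot, hNp, hp1]
    obtain ⟨M, hM⟩ := hroot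
    have hX1ne : (Polynomial.X - Polynomial.C (1 : ℝ)) ≠ 0 := Polynomial.X_sub_C_ne_zero 1
    have hc1 : M * (r ^ 2 - s ^ 2 * (1 - Polynomial.X ^ 2)) = Polynomial.X + 1 := by
      apply mul_left_cancel₀ hX1ne
      rw [← mul_assoc, ← hM, hNpNr]
      ring_nf
      rw [Polynomial.C_1]
      ring
    have hc2 : M * (u ^ 2 - v ^ 2 * (1 - Polynomial.X ^ 2)) = Polynomial.X - 1 := by
      apply mul_left_cancel₀ hX1ne
      rw [← mul_assoc, ← hM, hNpNu]
      ring_nf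
      rw [Polynomial.C_1]
      ring
    have hd1 : M ∣ Polynomial.X + 1 := ⟨_, hc1.symm⟩
    have hd2 : M ∣ Polynomial.X - 1 := ⟨_, hc2.symm⟩
    have hd3 : M ∣ (2 : Polynomial ℝ) := by
      have := dvd_sub hd1 hd2
      have e : (Polynomial.X + 1) - (Polynomial.X - 1) = (2 : Polynomial ℝ) := by ring
      rwa [e] at this
    have hMne : M ≠ 0 := by
      intro h
      rw [h, zero_mul] at hc1
      have := congrArg (Polynomial.eval 0) hc1
      simp at this
    have hdeg : M.natDegree = 0 := by
      have h2 := Polynomial.natDegree_le_of_dvd hd3 (by norm_num)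
      simpa using h2
    have hMC : M = Polynomial.C (M.coeff 0) := Polynomial.eq_C_of_natDegree_eq_zero hdeg
    set c := M.coeff 0 with hc
    have hcne : c ≠ 0 := fun h => hMne (by rw [hMC, h, map_zero])
    -- evaluate Np = (X - 1) * M at 2 and -1
    have hNpeq : p ^ 2 - q ^ 2 * (1 - Polynomial.X ^ 2)
        = (Polynomial.X - Polynomial.C (1 : ℝ)) * Polynomial.C c := by
      rw [← hNp, hM, ← hMC]
    have he2 := congrArg (Polynomial.eval 2) hNpeq
    have hem1 := congrArg (Polynomial.eval (-1)) hNpeq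
    simp only [Polynomial.eval_sub, Polynomial.eval_mul, Polynomial.eval_pow,
      Polynomial.eval_one, Polynomial.eval_X, Polynomial.eval_C] at he2 hem1
    have hc0 : c = 0 := by
      nlinarith [sq_nonneg (p.eval 2), sq_nonneg (q.eval 2), sq_nonneg (p.eval (-1)),
        sq_nonneg (q.eval (-1)), he2, hem1]
    exact hcne hc0
  exact ⟨fun h => main (h.principal _), main⟩
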